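/- Let G = (V,E) be an Eulerian multigraph with a nice tree decomposition, and let i be an introduce node with single child i', where X(i) = X(i') ∪ {w} for some w ∉ X(i'). Then G_ℓ(i) = G_ℓ(i'), L(i) = L(i'), C_ℓ(i) = {c.0 : c ∈ C_ℓ(i')} (appending charge 0 for w), S(i) = {s.w : s ∈ S(i')} (appending s_w = w), and for every c ∈ C_ℓ(i') and s ∈ S(i'): ψ(i, c.0, s.w) = ψ(i', c, s). -/

import Mathlib

/-- An undirected multigraph on vertex set `V` with edge set `E`:
each edge is assigned an unordered pair of endpoints. -/
structure Multigraph (V : Type) (E : Type) where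
  ends : E → Sym2 V

namespace Multigraph

variable {V E : Type} [Fintype V] [Fintype E] [DecidableEq V] [DecidableEq E]

/-- The multiplicity of a vertex in an unordered pair (2 for a loop). -/
def endMult (v : V) : Sym2 V → ℕ :=
  Sym2.lift ⟨fun a b => (if a = v then 1 else 0) + (if b = v then 1 else 0),
    by intro a b; exact add_comm _ _⟩

/-- The degree of `v` counting only edges in `S` (loops count twice). -/
noncomputable def degOn (G : Multigraph V E) (S : Set E) (v : V) : ℕ :=
  ∑ e ∈ (Set.toFinite S).toFinset, endMult v (G.ends e)

/-- The degree of a vertex (loops count twice). -/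
noncomputable def degree (G : Multigraph V E) (v : V) : ℕ :=
  G.degOn Set.univ v

/-- Two vertices are adjacent if some edge has them as its endpoints. -/
def Adj (G : Multigraph V E) (u v : V) : Prop := ∃ e, G.ends e = s(u, v)

/-- A multigraph is connected if any two vertices are joined by a walk. -/
def Connected (G : Multigraph V E) : Prop := ∀ u v, Relation.ReflTransGen G.Adj u v

/-- A multigraph is Eulerian if it is connected and every degree is even. -/
def IsEulerianGraph (G : Multigraph V E) : Prop :=
  G.Connected ∧ ∀ v, Even (G.degree v)

/-- An orientation of (all edges of) `G`: each edge gets a direction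
compatible with its endpoints. -/
structure Orientation (G : Multigraph V E) where
  dir : E → V × V
  compat : ∀ e, G.ends e = s((dir e).1, (dir e).2)

/-- Out-degree of `v`, counting only edges in `P`. -/
noncomputable def Orientation.outOn {G : Multigraph V E} (o : G.Orientation) (P : Set E) (v : V) : ℕ :=
  Nat.card {e : E | e ∈ P ∧ (o.dir e).1 = v}

/-- In-degree of `v`, counting only edges in `P`. -/
noncomputable def Orientation.inOn {G : Multigraph V E} (o : G.Orientation) (P : Set E) (v : V) : ℕ :=
  Nat.card {e : E | e ∈ P ∧ (o.dir e).2 = v}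

/-- An orientation is Eulerian if every vertex has in-degree equal to out-degree. -/
def Orientation.IsEulerian {G : Multigraph V E} (o : G.Orientation) : Prop :=
  ∀ v, o.outOn Set.univ v = o.inOn Set.univ v

/-- An Euler tour of `G`: a cyclic arrangement of all edges, each given a
direction, such that the head of each arc is the tail of the next. -/
structure EulerTour (G : Multigraph V E) where
  dir : E → V × V
  compat : ∀ e, G.ends e = s((dir e).1, (dir e).2)
  seq : ZMod (Fintype.card E) ≃ E
  link : ∀ i, (dir (seq i)).2 = (dir (seq (i + 1))).1

/-- Two Euler tours are identified when one is a cyclic permutation of the other. -/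
def EulerTour.CyclicEquiv {G : Multigraph V E} (T T' : G.EulerTour) : Prop :=
  T.dir = T'.dir ∧ ∃ k, ∀ i, T'.seq i = T.seq (i + k)

/-- The number of Euler tours of `G`, up to cyclic permutation. -/
noncomputable def numEulerTours (G : Multigraph V E) : ℕ :=
  Nat.card (Quot (EulerTour.CyclicEquiv (G := G)))

end Multigraph

/-- A tree decomposition of the multigraph `G`: a tree `T` on node set `I`
with bags `X i ⊆ V` covering all vertices and all edges, such that for each
vertex the set of nodes whose bag contains it induces a subtree of `T`. -/
structure TreeDecomp {V E : Type} (G : Multigraph V E) (I : Type) (T : SimpleGraph I) where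
  isTree : T.IsTree
  X : I → Set V
  vertexCover : ∀ v : V, ∃ i, v ∈ X i
  edgeCover : ∀ e : E, ∃ i, ∀ v ∈ G.ends e, v ∈ X i
  coherent : ∀ v : V, (T.induce {i | v ∈ X i}).Connected

/-- `j` lies in the subtree rooted at `i` of the tree `T` rooted at `ρ`:
every walk from the root `ρ` to `j` passes through `i`. -/
def Descends {I : Type} (T : SimpleGraph I) (ρ i j : I) : Prop :=
  ∀ p : T.Walk ρ j, i ∈ p.support

namespace TreeDecomp

variable {V E I : Type} [Fintype V] [Fintype E] [DecidableEq V] [DecidableEq E]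
  {G : Multigraph V E} {T : SimpleGraph I}

/-- `V(i)`: all vertices appearing in bags of the subtree rooted at `i`. -/
def Vset (td : TreeDecomp G I T) (ρ i : I) : Set V :=
  {v | ∃ j, Descends T ρ i j ∧ v ∈ td.X j}

/-- `E(i)`: edges with both endpoints in the bag `X i`. -/
def Eset (td : TreeDecomp G I T) (i : I) : Set E :=
  {e | ∀ v ∈ G.ends e, v ∈ td.X i}

/-- `E_ℓ(i)`: edges with both endpoints in `V(i)`, not both in `X i`. -/
def Elset (td : TreeDecomp G I T) (ρ i : I) : Set E :=
  {e | (∀ v ∈ G.ends e, v ∈ td.Vset ρ i) ∧ ¬ ∀ v ∈ G.ends e, v ∈ td.X i}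

/-- `L(i)`: bag vertices which are endpoints of some edge of `E_ℓ(i)`. -/
def Lset (td : TreeDecomp G I T) (ρ i : I) : Set V :=
  {x ∈ td.X i | ∃ e ∈ td.Elset ρ i, x ∈ G.ends e}

/-- `U(i) = X(i) \ L(i)`. -/
def Uset (td : TreeDecomp G I T) (ρ i : I) : Set V :=
  td.X i \ td.Lset ρ i

end TreeDecomp

namespace Multigraph

variable {V E : Type} [Fintype V] [Fintype E] [DecidableEq V] [DecidableEq E]

/-- An orientation of the edges in the set `S`: each edge of `S` gets a
direction compatible with its endpoints. -/
structure OrientationOn (G : Multigraph V E) (S : Set E) where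
  dir : {e : E // e ∈ S} → V × V
  compat : ∀ e, G.ends e.1 = s((dir e).1, (dir e).2)

namespace OrientationOn

variable {G : Multigraph V E} {S : Set E}

/-- Out-degree of `v` under `σ`, counting only edges in `P`. -/
noncomputable def outOn (σ : OrientationOn G S) (P : Set E) (v : V) : ℕ :=
  Nat.card {e : {e : E // e ∈ S} | e.1 ∈ P ∧ (σ.dir e).1 = v}

/-- In-degree of `v` under `σ`, counting only edges in `P`. -/
noncomputable def inOn (σ : OrientationOn G S) (P : Set E) (v : V) : ℕ :=
  Nat.card {e : {e : E // e ∈ S} | e.1 ∈ P ∧ (σ.dir e).2 = v}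

/-- The charge of `v` under `σ` (out-degree minus in-degree), counting only
edges in `P`. -/
noncomputable def chargeOn (σ : OrientationOn G S) (P : Set E) (v : V) : ℤ :=
  (σ.outOn P v : ℤ) - (σ.inOn P v : ℤ)

/-- The charge vector of `σ` (out-degree minus in-degree at each vertex). -/
noncomputable def charge (σ : OrientationOn G S) (v : V) : ℤ :=
  σ.chargeOn Set.univ v

/-- `v` has an outgoing arc in the arc set `F` of `σ`. -/
def arcOut (σ : OrientationOn G S) (F : Set {e : E // e ∈ S}) (v : V) : Prop :=
  ∃ e ∈ F, (σ.dir e).1 = v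

/-- The arc relation of the arc set `F` of `σ`. -/
def arcRel (σ : OrientationOn G S) (F : Set {e : E // e ∈ S}) (u v : V) : Prop :=
  ∃ e ∈ F, σ.dir e = (u, v)

/-- `F` is an in-directed forest: every vertex has at most one outgoing arc,
and there is no directed cycle. -/
def IsInForest (σ : OrientationOn G S) (F : Set {e : E // e ∈ S}) : Prop :=
  (∀ v : V, {e | e ∈ F ∧ (σ.dir e).1 = v}.Subsingleton) ∧
  (∀ v : V, ¬ Relation.TransGen (σ.arcRel F) v v)

/-- The root set of the forest `F` relative to the vertex set `Ls`:
the vertices of `Ls` with no outgoing arc in `F`. -/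
def forRoots (σ : OrientationOn G S) (F : Set {e : E // e ∈ S}) (Ls : Set V) : Set V :=
  {v ∈ Ls | ¬ σ.arcOut F v}

/-- `F` is a forest in the sense of `FOR`: an in-directed forest of arcs of `σ`
whose roots are contained in `Ls` and in which every vertex of
`internal ∪ (Ls \ R(F))` has an outgoing arc. -/
def MemFOR (σ : OrientationOn G S) (F : Set {e : E // e ∈ S})
    (internal Ls : Set V) : Prop :=
  σ.IsInForest F ∧
  (∀ v : V, (∃ e ∈ F, v ∈ G.ends e.1) → ¬ σ.arcOut F v → v ∈ Ls) ∧
  (∀ v ∈ internal ∪ (Ls \ σ.forRoots F Ls), σ.arcOut F v)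

/-- `s` is the root vector of the forest `F`: it assigns to each `x ∈ Ls` the
root of the tree of `F` containing `x`, and fixes every other vertex. -/
def IsRootVec (σ : OrientationOn G S) (F : Set {e : E // e ∈ S})
    (Ls : Set V) (s : V → V) : Prop :=
  (∀ x, x ∉ Ls → s x = x) ∧
  (∀ x ∈ Ls, s x ∈ σ.forRoots F Ls ∧ Relation.ReflTransGen (σ.arcRel F) x (s x))

end OrientationOn

end Multigraph

namespace TreeDecomp

open Multigraph

variable {V E I : Type} [Fintype V] [Fintype E] [DecidableEq V] [DecidableEq E]
  {G : Multigraph V E} {T : SimpleGraph I}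

/-- `σ ∈ D_ℓ(i)`: an orientation of the edges of `G_ℓ(i)` which is Eulerian
(in-degree equals out-degree) at every vertex of `V(i) \ X(i)`. -/
def MemDl (td : TreeDecomp G I T) (ρ i : I)
    (σ : OrientationOn G (td.Elset ρ i)) : Prop :=
  ∀ v ∈ td.Vset ρ i \ td.X i, σ.outOn Set.univ v = σ.inOn Set.univ v

/-- `C_ℓ(i)`: the set of charge vectors of orientations in `D_ℓ(i)`. -/
def Cl (td : TreeDecomp G I T) (ρ i : I) : Set (V → ℤ) :=
  {c | ∃ σ : OrientationOn G (td.Elset ρ i), td.MemDl ρ i σ ∧ c = σ.charge}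

/-- `S(i)`: the set of root vectors for node `i` (extended by the identity off
`L(i)`): `s_x = x` off `L(i)`, at least one `x ∈ L(i)` has `s_x = x`, and,
with `R(s) = {x ∈ L(i) : s_x = x}`, every `y ∈ L(i) \ R(s)` has `s_y ∈ R(s)`. -/
def RootVectors (td : TreeDecomp G I T) (ρ i : I) : Set (V → V) :=
  {s | (∀ x, x ∉ td.Lset ρ i → s x = x) ∧
       (∃ x ∈ td.Lset ρ i, s x = x) ∧
       (∀ y ∈ td.Lset ρ i, s y ≠ y → (s y ∈ td.Lset ρ i ∧ s (s y) = s y))}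

/-- `ψ(i, c, s)`: the number of pairs `(𝓓, 𝓕)` with `𝓓 ∈ D_ℓ(i)`,
`𝓕 ∈ FOR(𝓓)`, whose charge vector is `c` and whose root vector is `s`. -/
noncomputable def psi (td : TreeDecomp G I T) (ρ i : I) (c : V → ℤ) (s : V → V) : ℕ :=
  Nat.card {p : OrientationOn G (td.Elset ρ i) × Set {e : E // e ∈ td.Elset ρ i} //
    td.MemDl ρ i p.1 ∧
    p.1.MemFOR p.2 (td.Vset ρ i \ td.X i) (td.Lset ρ i) ∧
    p.1.charge = c ∧
    p.1.IsRootVec p.2 (td.Lset ρ i) s}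

end TreeDecomp

open Multigraph TreeDecomp

/-!
The subtree of `i` is `i` together with the subtree of its only child `i'`, so
`V(i) = V(i') ∪ X(i)`; and since `i` lies outside the subtree of `i'`, the coherence of the
decomposition forces `X(i) ∩ V(i') ⊆ X(i')`. An edge of `G_ℓ(i)` with an endpoint outside
`V(i')` would share a bag outside the subtree of `i'` with its other endpoint, which then lies in
`X(i') ⊆ X(i)`, so the edge would lie inside `X(i)`. Hence `E_ℓ(i) = E_ℓ(i')`, `L(i) = L(i')` and
`V(i) \ X(i) = V(i') \ X(i')`, and these are the only data on which `D_ℓ`, `FOR`, `C_ℓ`, `S` and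
`ψ` depend.
-/

section Descends

variable {I : Type} {T : SimpleGraph I} {ρ i j k : I}

theorem Descends.refl (T : SimpleGraph I) (ρ i : I) : Descends T ρ i i :=
  fun p => p.end_mem_support

theorem Descends.trans (hij : Descends T ρ i j) (hjk : Descends T ρ j k) : Descends T ρ i k := by
  classical
  intro p
  exact p.support_takeUntil_subset_support (hjk p) (hij (p.takeUntil j (hjk p)))

theorem Descends.antisymm (hρ : T.Reachable ρ i) (hij : Descends T ρ i j)
    (hji : Descends T ρ j i) : i = j := by
  classical
  by_contra hne
  obtain ⟨p⟩ := hρ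
  let P := p.toPath
  exact SimpleGraph.Walk.endpoint_notMem_support_takeUntil P.2 (hji P) hne
    (hij (P.1.takeUntil j (hji P)))

theorem Descends.of_walk_of_notMem_support (hij : Descends T ρ i j) (q : T.Walk k j)
    (hi : i ∉ q.support) : Descends T ρ i k := fun p =>
  ((SimpleGraph.Walk.mem_support_append_iff p q).mp (hij _)).resolve_right hi

theorem Descends.of_unique_child {i' : I} (honly : ∀ k, T.Adj i k → Descends T ρ i k → k = i')
    (hij : Descends T ρ i j) (hne : j ≠ i) : Descends T ρ i' j := by
  classical
  intro p
  obtain ⟨D, hD, hDp⟩ : ∃ D : T.Walk i j, D.IsPath ∧ D.support ⊆ p.support := by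
    let P := p.toPath
    have hiP : i ∈ P.1.support := hij P
    exact ⟨P.1.dropUntil i hiP, P.2.dropUntil hiP,
      List.Subset.trans (P.1.support_dropUntil_subset_support hiP) p.support_toPath_subset_support⟩
  cases D with
  | nil => exact absurd rfl hne
  | @cons _ k _ hadj D' =>
    have hiD' : i ∉ D'.support := ((SimpleGraph.Walk.cons_isPath_iff _ _).mp hD).2
    have hk : k = i' := honly k hadj (hij.of_walk_of_notMem_support D' hiD')
    subst hk
    exact hDp (by simp)

end Descends

namespace TreeDecomp

variable {V E I : Type} {G : Multigraph V E} {T : SimpleGraph I} (td : TreeDecomp G I T)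

theorem mem_X_of_descends_of_not_descends {ρ i' j₀ j₁ : I} (h₀ : ¬ Descends T ρ i' j₀)
    (h₁ : Descends T ρ i' j₁) {v : V} (hv₀ : v ∈ td.X j₀) (hv₁ : v ∈ td.X j₁) : v ∈ td.X i' := by
  obtain ⟨p, hp⟩ := not_forall.mp h₀
  obtain ⟨q⟩ := (td.coherent v).preconnected ⟨j₀, hv₀⟩ ⟨j₁, hv₁⟩
  let q' : T.Walk j₀ j₁ := q.map (SimpleGraph.Embedding.induce {n | v ∈ td.X n}).toHom
  have h : i' ∈ q'.support :=
    ((SimpleGraph.Walk.mem_support_append_iff p q').mp (h₁ _)).resolve_left hp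
  obtain ⟨⟨x, hx⟩, -, hxi⟩ := List.mem_map.mp (SimpleGraph.Walk.support_map _ q ▸ h)
  exact hxi ▸ hx

theorem X_subset_Vset (ρ i : I) : td.X i ⊆ td.Vset ρ i :=
  fun _ hv => ⟨i, Descends.refl T ρ i, hv⟩

section UniqueChild

variable {ρ i i' : I}

theorem Vset_eq_union_of_unique_child (hdesc : Descends T ρ i i')
    (honly : ∀ j, T.Adj i j → Descends T ρ i j → j = i') :
    td.Vset ρ i = td.Vset ρ i' ∪ td.X i := by
  ext v
  constructor
  · rintro ⟨j, hj, hv⟩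
    by_cases hji : j = i
    · exact Or.inr (hji ▸ hv)
    · exact Or.inl ⟨j, hj.of_unique_child honly hji, hv⟩
  · rintro (⟨j, hj, hv⟩ | hv)
    · exact ⟨j, hdesc.trans hj, hv⟩
    · exact td.X_subset_Vset ρ i hv

theorem X_inter_Vset_child_subset (hadj : T.Adj i i') (hdesc : Descends T ρ i i') :
    td.X i ∩ td.Vset ρ i' ⊆ td.X i' := by
  rintro v ⟨hvi, j, hj, hvj⟩
  have hi : ¬ Descends T ρ i' i := fun h =>
    hadj.ne (hdesc.antisymm (td.isTree.connected.preconnected ρ i) h)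
  exact td.mem_X_of_descends_of_not_descends hi hj hvi hvj

theorem Vset_diff_X_eq_of_unique_child (hadj : T.Adj i i') (hdesc : Descends T ρ i i')
    (honly : ∀ j, T.Adj i j → Descends T ρ i j → j = i') (hsub : td.X i' ⊆ td.X i) :
    td.Vset ρ i \ td.X i = td.Vset ρ i' \ td.X i' := by
  have hsep := td.X_inter_Vset_child_subset hadj hdesc
  rw [td.Vset_eq_union_of_unique_child hdesc honly]
  ext v
  simp only [Set.mem_sdiff, Set.mem_union]
  constructor
  · rintro ⟨hv | hv, hvX⟩
    · exact ⟨hv, fun h => hvX (hsub h)⟩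
    · exact absurd hv hvX
  · rintro ⟨hv, hvX⟩
    exact ⟨Or.inl hv, fun h => hvX (hsep ⟨h, hv⟩)⟩

theorem Elset_eq_of_unique_child (hadj : T.Adj i i') (hdesc : Descends T ρ i i')
    (honly : ∀ j, T.Adj i j → Descends T ρ i j → j = i') (hsub : td.X i' ⊆ td.X i) :
    td.Elset ρ i = td.Elset ρ i' := by
  have hsep := td.X_inter_Vset_child_subset hadj hdesc
  have hV := td.Vset_eq_union_of_unique_child hdesc honly
  ext e
  constructor
  · rintro ⟨hVi, hnX⟩
    have hends : ∀ v ∈ G.ends e, v ∈ td.Vset ρ i' := by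
      by_contra! ⟨a, ha, haV⟩
      obtain ⟨j₀, hj₀⟩ := td.edgeCover e
      have hj₀' : ¬ Descends T ρ i' j₀ := fun h => haV ⟨j₀, h, hj₀ a ha⟩
      refine hnX fun v hv => ?_
      rcases (hV ▸ hVi v hv : v ∈ td.Vset ρ i' ∪ td.X i) with ⟨j₁, hj₁, hvj₁⟩ | hvX
      · exact hsub (td.mem_X_of_descends_of_not_descends hj₀' hj₁ (hj₀ v hv) hvj₁)
      · exact hvX
    exact ⟨hends, fun h => hnX fun v hv => hsub (h v hv)⟩
  · rintro ⟨hVi', hnX⟩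
    exact ⟨fun v hv => hV ▸ Or.inl (hVi' v hv),
      fun h => hnX fun v hv => hsep ⟨h v hv, hVi' v hv⟩⟩

theorem Lset_eq_of_unique_child (hadj : T.Adj i i') (hdesc : Descends T ρ i i')
    (honly : ∀ j, T.Adj i j → Descends T ρ i j → j = i') (hsub : td.X i' ⊆ td.X i) :
    td.Lset ρ i = td.Lset ρ i' := by
  have hsep := td.X_inter_Vset_child_subset hadj hdesc
  ext x
  simp only [Lset, td.Elset_eq_of_unique_child hadj hdesc honly hsub, Set.mem_ofPred_eq]
  exact ⟨fun ⟨hx, e, he, hxe⟩ => ⟨hsep ⟨hx, he.1 x hxe⟩, e, he, hxe⟩,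
    fun ⟨hx, he⟩ => ⟨hsub hx, he⟩⟩

end UniqueChild

end TreeDecomp

-- Vectors are total functions on `V`, so the paper's appended entries `c_w = 0` and `s_w = w`
-- need no separate treatment.
theorem psi_introduce_node_general
    {V E I : Type}
    (G : Multigraph V E)
    (T : SimpleGraph I) (td : TreeDecomp G I T) (ρ i i' : I)
    (hchild : T.Adj i i' ∧ Descends T ρ i i')
    (honly : ∀ j, T.Adj i j → Descends T ρ i j → j = i')
    (w : V) (hX : td.X i = td.X i' ∪ {w}) :
    td.Elset ρ i = td.Elset ρ i' ∧
    td.Lset ρ i = td.Lset ρ i' ∧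
    td.Cl ρ i = td.Cl ρ i' ∧
    td.RootVectors ρ i = td.RootVectors ρ i' ∧
    (∀ c ∈ td.Cl ρ i', ∀ s ∈ td.RootVectors ρ i',
      td.psi ρ i c s = td.psi ρ i' c s) := by
  obtain ⟨hadj, hdesc⟩ := hchild
  have hsub : td.X i' ⊆ td.X i := hX ▸ Set.subset_union_left
  have hE := td.Elset_eq_of_unique_child hadj hdesc honly hsub
  have hL := td.Lset_eq_of_unique_child hadj hdesc honly hsub
  have hVX := td.Vset_diff_X_eq_of_unique_child hadj hdesc honly hsub
  refine ⟨hE, hL, ?_, ?_, fun c _ s _ => ?_⟩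
  · unfold Cl MemDl
    rw [hE, hVX]
  · unfold RootVectors
    rw [hL]
  · unfold psi MemDl
    rw [hE, hVX, hL]

/-- **introduce node.** If `i` is an introduce node with single
child `i'`, `X(i) = X(i') ∪ {w}` with `w ∉ X(i')`, then `G_ℓ(i) = G_ℓ(i')`,
`L(i) = L(i')`, the charge vectors and root vectors coincide (the appended
entries for `w` being `0` and `w` respectively, which in this encoding of
vectors as total functions is automatic), and `ψ(i, c, s) = ψ(i', c, s)` for
all `c ∈ C_ℓ(i')` and `s ∈ S(i')`. -/
theorem psi_introduce_node
    {V E I : Type} [Fintype V] [Fintype E] [DecidableEq V] [DecidableEq E]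
    (G : Multigraph V E) (hG : G.IsEulerianGraph)
    (T : SimpleGraph I) (td : TreeDecomp G I T) (ρ i i' : I)
    (hchild : T.Adj i i' ∧ Descends T ρ i i')
    (honly : ∀ j, T.Adj i j → Descends T ρ i j → j = i')
    (w : V) (hw : w ∉ td.X i') (hX : td.X i = td.X i' ∪ {w}) :
    td.Elset ρ i = td.Elset ρ i' ∧
    td.Lset ρ i = td.Lset ρ i' ∧
    td.Cl ρ i = td.Cl ρ i' ∧
    td.RootVectors ρ i = td.RootVectors ρ i' ∧
    (∀ c ∈ td.Cl ρ i', ∀ s ∈ td.RootVectors ρ i',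
      td.psi ρ i c s = td.psi ρ i' c s) :=
  psi_introduce_node_general G T td ρ i i' hchild honly w hX
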